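/- arXiv:2510.00903 — 5 statements merged into one kernel-verified Lean document; each statement's English description precedes it below -/
import Mathlib

section
/- If k is a positive natural number and ε > 0 satisfies k²·ε ≤ 1, then the product ∏_{i=0}^{k−1} (1 + i·ε) is at most 1 + e·k²·ε, where e is Euler's number. -/
open Finset

namespace Real

theorem exp_le_one_add_exp_one_sub_one_mul {x : ℝ} (h₀ : 0 ≤ x) (h₁ : x ≤ 1) :
    exp x ≤ 1 + (exp 1 - 1) * x := by
  have := convexOn_exp.2 (Set.mem_univ 0) (Set.mem_univ 1) (sub_nonneg.2 h₁) h₀ (by ring)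
  simp only [smul_eq_mul, mul_zero, mul_one, zero_add, exp_zero] at this
  linarith

end Real

theorem sum_range_natCast_mul_le {R : Type*} [CommSemiring R] [PartialOrder R] [IsOrderedRing R]
    (k : ℕ) {ε : R} (hε : 0 ≤ ε) : ∑ i ∈ range k, (i : R) * ε ≤ (k : R) ^ 2 * ε := by
  calc ∑ i ∈ range k, (i : R) * ε ≤ ∑ _i ∈ range k, (k : R) * ε :=
        sum_le_sum fun i hi ↦ mul_le_mul_of_nonneg_right (Nat.mono_cast (mem_range.1 hi).le) hε
    _ = (k : R) ^ 2 * ε := by rw [sum_const, card_range, nsmul_eq_mul]; ring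

theorem prod_one_add_mul_le_general (k : ℕ) (ε : ℝ) (hε : 0 < ε)
    (h : (k : ℝ) ^ 2 * ε ≤ 1) :
    ∏ i ∈ Finset.range k, (1 + (i : ℝ) * ε) ≤ 1 + Real.exp 1 * (k : ℝ) ^ 2 * ε := by
  have hx : 0 ≤ (k : ℝ) ^ 2 * ε := by positivity
  calc ∏ i ∈ range k, (1 + (i : ℝ) * ε) ≤ Real.exp (∑ i ∈ range k, (i : ℝ) * ε) :=
        Real.prod_one_add_le_exp_sum _ fun i ↦ by positivity
    _ ≤ Real.exp ((k : ℝ) ^ 2 * ε) := Real.exp_le_exp.2 (sum_range_natCast_mul_le k hε.le)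
    _ ≤ 1 + (Real.exp 1 - 1) * ((k : ℝ) ^ 2 * ε) := Real.exp_le_one_add_exp_one_sub_one_mul hx h
    _ ≤ 1 + Real.exp 1 * (k : ℝ) ^ 2 * ε := by nlinarith

theorem prod_one_add_mul_le (k : ℕ) (hk : 0 < k) (ε : ℝ) (hε : 0 < ε)
    (h : (k : ℝ) ^ 2 * ε ≤ 1) :
    ∏ i ∈ Finset.range k, (1 + (i : ℝ) * ε) ≤ 1 + Real.exp 1 * (k : ℝ) ^ 2 * ε :=
  prod_one_add_mul_le_general k ε hε h
end

section
/- For every positive natural number n, the central binomial coefficient satisfies (4^n/√(π n))·(1 − 1/(6n)) ≤ C(2n, n) ≤ 4^n/√(π n). -/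
/-!
Write `n! = s n · √(2n) (n/e)^n`, where `s = Stirling.stirlingSeq` decreases to `√π`. Then
`C(2n, n) = 4^n / √(πn) · √π s(2n) / s(n)²`, so it suffices to bound the last factor.
Since `√π ≤ s(2n) ≤ s(n)`, we get `√π s(2n) ≤ s(n)²`. Telescoping Robbins' stepwise estimate
`log s(k) - log s(k+1) ≤ 1/(12k) - 1/(12(k+1))` gives `s(n) ≤ √π e^{1/(12n)}`, hence
`s(n)² ≤ π e^{1/(6n)} ≤ π / (1 - 1/(6n)) ≤ √π s(2n) / (1 - 1/(6n))`.
-/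

open Real Filter Topology
open scoped Nat

namespace Stirling

theorem stirlingSeq_pos {n : ℕ} (hn : n ≠ 0) : 0 < stirlingSeq n :=
  (sqrt_pos.2 pi_pos).trans_le (sqrt_pi_le_stirlingSeq hn)

theorem log_stirlingSeq_le {n : ℕ} (hn : n ≠ 0) :
    log (stirlingSeq n) ≤ log √π + 1 / (12 * n) := by
  obtain ⟨m, rfl⟩ := Nat.exists_eq_succ_of_ne_zero hn
  let f : ℕ → ℝ := fun k ↦ log (stirlingSeq (k + 1)) - 1 / (12 * (k + 1 : ℕ))
  have hf : Monotone f := monotone_nat_of_le_succ fun k ↦ by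
    have hstep := log_stirlingSeq_sdiff_le (k + 1)
    have htelescope : (1 : ℝ) / (12 * (k + 1) * (k + 1 + 1)) =
        1 / (12 * (k + 1)) - 1 / (12 * (k + 1 + 1)) := by
      field_simp; ring
    simp only [f]
    push_cast at hstep ⊢
    linarith
  have hlim : Tendsto f atTop (𝓝 (log √π)) := by
    have hs := (tendsto_stirlingSeq_sqrt_pi.comp (tendsto_add_atTop_nat 1)).log
      (sqrt_pos.2 pi_pos).ne'
    have hr : Tendsto (fun k : ℕ ↦ 1 / (12 * ((k + 1 : ℕ) : ℝ))) atTop (𝓝 0) := by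
      simp only [one_div]
      exact tendsto_inv_atTop_zero.comp <| (tendsto_natCast_atTop_atTop.comp
        (tendsto_add_atTop_nat 1)).const_mul_atTop (by norm_num)
    have := hs.sub hr
    rwa [sub_zero] at this
  have := hf.ge_of_tendsto hlim m
  simp only [f, Nat.succ_eq_add_one] at this ⊢
  linarith

theorem stirlingSeq_le_sqrt_pi_mul_exp {n : ℕ} (hn : n ≠ 0) :
    stirlingSeq n ≤ √π * exp (1 / (12 * n)) :=
  calc stirlingSeq n = exp (log (stirlingSeq n)) := (exp_log (stirlingSeq_pos hn)).symm
    _ ≤ exp (log √π + 1 / (12 * n)) := exp_le_exp.2 (log_stirlingSeq_le hn)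
    _ = √π * exp (1 / (12 * n)) := by rw [exp_add, exp_log (sqrt_pos.2 pi_pos)]

theorem factorial_eq_stirlingSeq_mul {n : ℕ} (hn : n ≠ 0) :
    (n ! : ℝ) = stirlingSeq n * (√(2 * n) * (n / exp 1) ^ n) := by
  rw [stirlingSeq, div_mul_cancel₀]
  positivity

theorem choose_two_mul_self_eq_stirlingSeq {n : ℕ} (hn : n ≠ 0) :
    ((2 * n).choose n : ℝ) =
      4 ^ n / √(π * n) * (√π * stirlingSeq (2 * n) / stirlingSeq n ^ 2) := by
  have hchoose : ((2 * n).choose n : ℝ) * n ! * n ! = (2 * n)! := by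
    have := Nat.choose_mul_factorial_mul_factorial (n := 2 * n) (k := n) (by omega)
    rw [show 2 * n - n = n by omega] at this
    exact_mod_cast this
  have hsqrt : √(2 * ((2 * n : ℕ) : ℝ)) = 2 * √n := by
    rw [show (2 : ℝ) * (2 * n : ℕ) = 2 ^ 2 * n by push_cast; ring, sqrt_mul (by norm_num),
      sqrt_sq zero_le_two]
  have hpow : (((2 * n : ℕ) : ℝ) / exp 1) ^ (2 * n) = 4 ^ n * ((n / exp 1) ^ n) ^ 2 := by
    rw [show ((2 * n : ℕ) : ℝ) / exp 1 = 2 * (n / exp 1) by push_cast; ring, mul_pow,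
      pow_mul, pow_mul' _ 2 n]
    norm_num
  rw [factorial_eq_stirlingSeq_mul hn, factorial_eq_stirlingSeq_mul (by omega), hsqrt, hpow]
    at hchoose
  have h2n : √(2 * n : ℝ) ^ 2 = 2 * n := sq_sqrt (by positivity)
  have hsqn : √(n : ℝ) ^ 2 = n := sq_sqrt (by positivity)
  have hs := stirlingSeq_pos hn
  rw [sqrt_mul pi_pos.le]
  field_simp
  refine mul_left_cancel₀ (by positivity : 2 * √(n : ℝ) * ((n / exp 1) ^ n) ^ 2 ≠ 0) ?_
  linear_combination hchoose
    + 2 * ((2 * n).choose n : ℝ) * stirlingSeq n ^ 2 * ((n / exp 1) ^ n) ^ 2 * hsqn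
    - ((2 * n).choose n : ℝ) * stirlingSeq n ^ 2 * ((n / exp 1) ^ n) ^ 2 * h2n

theorem sqrt_pi_mul_stirlingSeq_two_mul_le_sq {n : ℕ} (hn : n ≠ 0) :
    √π * stirlingSeq (2 * n) ≤ stirlingSeq n ^ 2 := by
  obtain ⟨m, rfl⟩ := Nat.exists_eq_succ_of_ne_zero hn
  have hanti : stirlingSeq (2 * (m + 1)) ≤ stirlingSeq (m + 1) :=
    stirlingSeq'_antitone (show m ≤ 2 * m + 1 by omega)
  rw [sq]
  exact mul_le_mul (sqrt_pi_le_stirlingSeq hn) hanti (stirlingSeq'_pos _).le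
    (stirlingSeq_pos hn).le

theorem one_sub_mul_sq_stirlingSeq_le {n : ℕ} (hn : n ≠ 0) :
    (1 - 1 / (6 * n)) * stirlingSeq n ^ 2 ≤ √π * stirlingSeq (2 * n) := by
  have hsq : stirlingSeq n ^ 2 ≤ π * exp (1 / (6 * n)) :=
    calc stirlingSeq n ^ 2 ≤ (√π * exp (1 / (12 * n))) ^ 2 := by
          gcongr
          · exact (stirlingSeq_pos hn).le
          · exact stirlingSeq_le_sqrt_pi_mul_exp hn
      _ = π * exp (1 / (6 * n)) := by
          rw [mul_pow, sq_sqrt pi_pos.le, ← exp_nat_mul]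
          congr 2
          field_simp
          norm_num
  have hcoef : (0 : ℝ) ≤ 1 - 1 / (6 * n) := by
    have : (1 : ℝ) ≤ n := by exact_mod_cast Nat.one_le_iff_ne_zero.2 hn
    rw [sub_nonneg, div_le_one (by positivity)]
    linarith
  calc (1 - 1 / (6 * n)) * stirlingSeq n ^ 2
      ≤ (1 - 1 / (6 * n)) * (π * exp (1 / (6 * n))) := by gcongr
    _ ≤ exp (-(1 / (6 * n))) * (π * exp (1 / (6 * n))) := by
        gcongr; exact one_sub_le_exp_neg _
    _ = π := by rw [mul_left_comm, ← exp_add]; simp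
    _ = √π * √π := (mul_self_sqrt pi_pos.le).symm
    _ ≤ √π * stirlingSeq (2 * n) := by gcongr; exact sqrt_pi_le_stirlingSeq (by omega)

end Stirling

open Stirling in
theorem centralBinom_bounds (n : ℕ) (hn : 0 < n) :
    (4 : ℝ) ^ n / Real.sqrt (Real.pi * n) * (1 - 1 / (6 * n)) ≤ (Nat.choose (2 * n) n : ℝ) ∧
    (Nat.choose (2 * n) n : ℝ) ≤ (4 : ℝ) ^ n / Real.sqrt (Real.pi * n) := by
  have hn : n ≠ 0 := hn.ne'
  have hs : 0 < stirlingSeq n ^ 2 := pow_pos (stirlingSeq_pos hn) 2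
  rw [choose_two_mul_self_eq_stirlingSeq hn]
  constructor
  · gcongr
    rw [le_div_iff₀ hs]
    exact one_sub_mul_sq_stirlingSeq_le hn
  · refine mul_le_of_le_one_right (by positivity) ?_
    rw [div_le_one hs]
    exact sqrt_pi_mul_stirlingSeq_two_mul_le_sq hn
end

section
/- For even d ≥ 2: (1/(d·((d/2−1)!)²))·∫_0^∞∫_0^∞ max{s,t}·e^{−s−t}·(st)^{d/2−1} ds dt = 2^{−d}·∑_{j=d/2}^{d} C(d,j). -/
open Finset MeasureTheory Set

lemma integrableOn_pow_mul_exp (n : ℕ) {a : ℝ} (ha : 0 < a) :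
    IntegrableOn (fun x : ℝ => x ^ n * Real.exp (-(a * x))) (Ioi 0) := by
  have := integrableOn_rpow_mul_exp_neg_mul_rpow (p := 1) (s := n) (b := a)
    (neg_one_lt_zero.trans_le (Nat.cast_nonneg n)) one_pos ha
  refine this.congr_fun (fun x hx => ?_) measurableSet_Ioi
  beta_reduce; rw [Real.rpow_one, Real.rpow_natCast, neg_mul]

lemma integral_pow_mul_exp (n : ℕ) {a : ℝ} (ha : 0 < a) :
    ∫ x in Ioi (0:ℝ), x ^ n * Real.exp (-(a * x)) = n.factorial / a ^ (n + 1) := by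
  have h := Real.integral_rpow_mul_exp_neg_mul_Ioi (a := (n : ℝ) + 1) (r := a)
    (by positivity) ha
  rw [show ((n : ℝ) + 1 - 1) = (n : ℝ) by ring,
    Real.Gamma_nat_eq_factorial,
    show ((n : ℝ) + 1) = ((n + 1 : ℕ) : ℝ) by push_cast; ring, Real.rpow_natCast] at h
  rw [show ∫ x in Ioi (0:ℝ), x ^ n * Real.exp (-(a * x))
      = ∫ x in Ioi (0:ℝ), x ^ ((n : ℝ)) * Real.exp (-(a * x)) by
    refine setIntegral_congr_fun measurableSet_Ioi (fun x hx => ?_)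
    rw [Real.rpow_natCast], h]
  rw [div_pow, one_pow]
  ring

noncomputable def Pp (m : ℕ) (t : ℝ) : ℝ :=
  ∑ i ∈ range (m + 1), ((m.factorial : ℝ) / (i.factorial : ℝ)) * t ^ i

lemma Pp_zero (m : ℕ) : Pp m 0 = m.factorial := by
  rw [Pp, Finset.sum_eq_single 0]
  · simp
  · intro i hi hne; simp [zero_pow hne]
  · simp

lemma hasDerivAt_F (m : ℕ) (t : ℝ) :
    HasDerivAt (fun t => -Real.exp (-t) * Pp m t) (Real.exp (-t) * t ^ m) t := by
  have h1 : HasDerivAt (fun t : ℝ => -Real.exp (-t)) (Real.exp (-t)) t := by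
    have h := ((Real.hasDerivAt_exp (-t)).comp t (hasDerivAt_neg t)).neg
    exact h.congr_deriv (by simp)
  have h2 : HasDerivAt (fun t => Pp m t)
      (∑ i ∈ range (m + 1), ((m.factorial : ℝ) / (i.factorial : ℝ)) * (i * t ^ (i - 1))) t := by
    exact HasDerivAt.fun_sum (fun i _ => (hasDerivAt_pow i t).const_mul _)
  have h3 := h1.mul h2
  refine h3.congr_deriv ?_
  have key : ∑ i ∈ range (m + 1), ((m.factorial : ℝ) / (i.factorial : ℝ)) * (i * t ^ (i - 1))
      = ∑ i ∈ range m, ((m.factorial : ℝ) / (i.factorial : ℝ)) * t ^ i := by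
    rw [Finset.sum_range_succ'] -- peels off i = 0
    simp only [Nat.cast_zero, zero_mul, mul_zero, add_zero]
    refine Finset.sum_congr rfl (fun i _ => ?_)
    have : (Nat.factorial (i + 1) : ℝ) = (i + 1) * i.factorial := by
      rw [Nat.factorial_succ]; push_cast; ring
    rw [this]
    have h4 : (i.factorial : ℝ) ≠ 0 := Nat.cast_ne_zero.mpr i.factorial_ne_zero
    field_simp
    rw [Nat.add_sub_cancel]; push_cast; ring
  rw [key]
  have : Pp m t = (∑ i ∈ range m, ((m.factorial : ℝ) / (i.factorial : ℝ)) * t ^ i) + t ^ m := by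
    rw [Pp, Finset.sum_range_succ, div_self (Nat.cast_ne_zero.mpr m.factorial_ne_zero), one_mul]
  rw [this]
  ring

lemma head_integral (m : ℕ) {s : ℝ} (hs : 0 ≤ s) :
    ∫ t in Ioc (0:ℝ) s, t ^ m * Real.exp (-t)
      = m.factorial - Real.exp (-s) * Pp m s := by
  have h := intervalIntegral.integral_eq_sub_of_hasDerivAt
    (f := fun t => -Real.exp (-t) * Pp m t)
    (f' := fun t => Real.exp (-t) * t ^ m)
    (a := 0) (b := s)
    (fun x _ => hasDerivAt_F m x) ?_
  · rw [intervalIntegral.integral_of_le hs] at h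
    rw [show (∫ t in Ioc (0:ℝ) s, t ^ m * Real.exp (-t))
        = ∫ t in Ioc (0:ℝ) s, Real.exp (-t) * t ^ m by
      exact setIntegral_congr_fun measurableSet_Ioc (fun x _ => mul_comm _ _), h]
    rw [Pp_zero]
    simp
    ring
  · apply Continuous.intervalIntegrable
    continuity

lemma tendsto_F (m : ℕ) :
    Filter.Tendsto (fun t => -Real.exp (-t) * Pp m t) Filter.atTop (nhds 0) := by
  have : ∀ t : ℝ, -Real.exp (-t) * Pp m t
      = -∑ i ∈ range (m + 1), ((m.factorial : ℝ) / (i.factorial : ℝ)) * (t ^ i * Real.exp (-t)) := by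
    intro t; rw [Pp, Finset.mul_sum, ← Finset.sum_neg_distrib]
    exact Finset.sum_congr rfl (fun i _ => by ring)
  simp only [this]
  rw [show (0:ℝ) = -∑ i ∈ range (m + 1), ((m.factorial : ℝ) / (i.factorial : ℝ)) * 0 by simp]
  apply Filter.Tendsto.neg
  exact tendsto_finset_sum _ (fun i _ =>
    (Real.tendsto_pow_mul_exp_neg_atTop_nhds_zero i).const_mul _)

lemma tail_integral (n : ℕ) {s : ℝ} (hs : 0 < s) :
    ∫ t in Ioi s, t ^ n * Real.exp (-t) = Real.exp (-s) * Pp n s := by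
  have h := MeasureTheory.integral_Ioi_of_hasDerivAt_of_tendsto'
    (f := fun t => -Real.exp (-t) * Pp n t)
    (f' := fun t => Real.exp (-t) * t ^ n) (a := s)
    (fun x _ => hasDerivAt_F n x) ?_ (tendsto_F n)
  · rw [show (∫ t in Ioi s, t ^ n * Real.exp (-t))
        = ∫ t in Ioi s, Real.exp (-t) * t ^ n by
      exact setIntegral_congr_fun measurableSet_Ioi (fun x _ => mul_comm _ _), h]
    ring
  · refine ((integrableOn_pow_mul_exp n one_pos).mono_set
      (Ioi_subset_Ioi hs.le)).congr_fun (fun x hx => ?_) measurableSet_Ioi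
    beta_reduce; rw [one_mul, mul_comm]

lemma cont_g (m : ℕ) (s : ℝ) :
    Continuous (fun t : ℝ => max s t * Real.exp (-t) * t ^ m) := by
  exact ((continuous_const.max continuous_id).mul (Real.continuous_exp.comp
    continuous_neg)).mul (continuous_pow m)

lemma inner_integral (m : ℕ) {s : ℝ} (hs : 0 < s) :
    ∫ t in Ioi (0:ℝ), max s t * Real.exp (-s - t) * (s * t) ^ m
      = Real.exp (-s) * s ^ m *
        (s * (m.factorial - Real.exp (-s) * Pp m s) + Real.exp (-s) * Pp (m + 1) s) := by
  have step1 : ∫ t in Ioi (0:ℝ), max s t * Real.exp (-s - t) * (s * t) ^ m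
      = (Real.exp (-s) * s ^ m) * ∫ t in Ioi (0:ℝ), max s t * Real.exp (-t) * t ^ m := by
    rw [← integral_const_mul]
    refine setIntegral_congr_fun measurableSet_Ioi (fun t _ => ?_)
    rw [show -s - t = -s + -t by ring, Real.exp_add, mul_pow]
    ring
  rw [step1]
  have hsplit : Ioc (0:ℝ) s ∪ Ioi s = Ioi (0:ℝ) := Ioc_union_Ioi_eq_Ioi hs.le
  have hint1 : IntegrableOn (fun t : ℝ => max s t * Real.exp (-t) * t ^ m) (Ioc 0 s) :=
    (cont_g m s).integrableOn_Ioc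
  have hint2 : IntegrableOn (fun t : ℝ => max s t * Real.exp (-t) * t ^ m) (Ioi s) := by
    refine ((integrableOn_pow_mul_exp (m + 1) one_pos).mono_set
      (Ioi_subset_Ioi hs.le)).congr_fun (fun t ht => ?_) measurableSet_Ioi
    beta_reduce; rw [max_eq_right (le_of_lt ht), one_mul]
    ring
  have step2 : ∫ t in Ioi (0:ℝ), max s t * Real.exp (-t) * t ^ m
      = (∫ t in Ioc (0:ℝ) s, max s t * Real.exp (-t) * t ^ m)
        + ∫ t in Ioi s, max s t * Real.exp (-t) * t ^ m := by
    rw [← hsplit, setIntegral_union (Ioc_disjoint_Ioi le_rfl) measurableSet_Ioi hint1 hint2]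
  have step3 : ∫ t in Ioc (0:ℝ) s, max s t * Real.exp (-t) * t ^ m
      = s * (m.factorial - Real.exp (-s) * Pp m s) := by
    rw [← head_integral m hs.le, ← integral_const_mul]
    refine setIntegral_congr_fun measurableSet_Ioc (fun t ht => ?_)
    rw [max_eq_left ht.2]
    ring
  have step4 : ∫ t in Ioi s, max s t * Real.exp (-t) * t ^ m
      = Real.exp (-s) * Pp (m + 1) s := by
    rw [← tail_integral (m + 1) hs]
    refine setIntegral_congr_fun measurableSet_Ioi (fun t ht => ?_)
    rw [max_eq_right (le_of_lt ht)]
    ring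
  rw [step2, step3, step4]

lemma Pp_term_eq (n k : ℕ) (s : ℝ) : Real.exp (-(2*s)) * (s ^ k * Pp n s)
    = ∑ i ∈ range (n + 1),
        ((n.factorial : ℝ) / (i.factorial : ℝ)) * (s ^ (k + i) * Real.exp (-(2*s))) := by
  rw [Pp, Finset.mul_sum, Finset.mul_sum]
  refine Finset.sum_congr rfl (fun i _ => ?_)
  rw [pow_add]
  ring

lemma Pp_integrable (n k : ℕ) :
    IntegrableOn (fun s : ℝ => Real.exp (-(2*s)) * (s ^ k * Pp n s)) (Ioi 0) := by
  simp only [Pp_term_eq]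
  exact integrable_finset_sum _
    (fun i _ => ((integrableOn_pow_mul_exp (k + i) two_pos).const_mul _))

lemma Pp_integral (n k : ℕ) :
    ∫ s in Ioi (0:ℝ), Real.exp (-(2*s)) * (s ^ k * Pp n s)
      = ∑ i ∈ range (n + 1),
          ((n.factorial : ℝ) / (i.factorial : ℝ)) * ((k + i).factorial / 2 ^ (k + i + 1)) := by
  simp only [Pp_term_eq]
  rw [integral_finset_sum _
    (fun i _ => ((integrableOn_pow_mul_exp (k + i) two_pos).const_mul _))]
  refine Finset.sum_congr rfl (fun i _ => ?_)
  rw [integral_const_mul, integral_pow_mul_exp (k + i) two_pos]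

lemma outer_integral (m : ℕ) :
    ∫ s in Ioi (0:ℝ), Real.exp (-s) * s ^ m *
        (s * (m.factorial - Real.exp (-s) * Pp m s) + Real.exp (-s) * Pp (m + 1) s)
      = (m.factorial : ℝ) * ((m + 1).factorial : ℝ)
        - (∑ i ∈ range (m + 1),
            ((m.factorial : ℝ) / (i.factorial : ℝ)) * ((m + 1 + i).factorial / 2 ^ (m + 1 + i + 1)))
        + ∑ i ∈ range (m + 2),
            (((m + 1).factorial : ℝ) / (i.factorial : ℝ)) * ((m + i).factorial / 2 ^ (m + i + 1)) := by
  have hpt : ∀ s : ℝ, Real.exp (-s) * s ^ m *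
        (s * (m.factorial - Real.exp (-s) * Pp m s) + Real.exp (-s) * Pp (m + 1) s)
      = (m.factorial : ℝ) * (s ^ (m + 1) * Real.exp (-(1 * s)))
        - Real.exp (-(2*s)) * (s ^ (m + 1) * Pp m s)
        + Real.exp (-(2*s)) * (s ^ m * Pp (m + 1) s) := by
    intro s
    rw [show -(2*s) = -s + -s by ring, Real.exp_add, show -(1*s) = -s by ring, pow_succ]
    ring
  rw [show (∫ s in Ioi (0:ℝ), Real.exp (-s) * s ^ m *
        (s * (m.factorial - Real.exp (-s) * Pp m s) + Real.exp (-s) * Pp (m + 1) s))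
      = ∫ s in Ioi (0:ℝ), ((m.factorial : ℝ) * (s ^ (m + 1) * Real.exp (-(1 * s)))
        - Real.exp (-(2*s)) * (s ^ (m + 1) * Pp m s)
        + Real.exp (-(2*s)) * (s ^ m * Pp (m + 1) s)) from
    setIntegral_congr_fun measurableSet_Ioi (fun s _ => hpt s)]
  have iA : IntegrableOn (fun s : ℝ => (m.factorial : ℝ) * (s ^ (m + 1) * Real.exp (-(1 * s))))
      (Ioi 0) := (integrableOn_pow_mul_exp (m + 1) one_pos).const_mul _
  have iB := Pp_integrable m (m + 1)
  have iC := Pp_integrable (m + 1) m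
  have h1 := integral_add (iA.sub iB) iC
  simp only [Pi.add_apply, Pi.sub_apply] at h1
  have h2 := integral_sub iA iB
  rw [h1, h2, integral_const_mul,
    integral_pow_mul_exp (m + 1) one_pos, Pp_integral m (m + 1), Pp_integral (m + 1) m]
  simp

lemma S_eq (n : ℕ) :
    ∑ i ∈ range (n + 1), (((n + i).choose i : ℕ) : ℝ) * (1/2 : ℝ) ^ i = 2 ^ n := by
  induction n with
  | zero => simp
  | succ n ih =>
    set x : ℝ := (1/2 : ℝ) with hx
    set y : ℝ := ∑ i ∈ range (n + 1 + 1), (((n + 1 + i).choose i : ℕ) : ℝ) * x ^ i with hy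
    set C : ℝ := (((n + (n + 1)).choose (n + 1) : ℕ) : ℝ) with hC
    have hsplit : y
        = ((∑ j ∈ range (n + 1), (((n + 1 + j).choose j : ℕ) : ℝ) * x ^ (j + 1))
          + ∑ j ∈ range (n + 1), (((n + (j + 1)).choose (j + 1) : ℕ) : ℝ) * x ^ (j + 1)) + 1 := by
      rw [hy, Finset.sum_range_succ', ← Finset.sum_add_distrib]
      congr 1
      · refine Finset.sum_congr rfl (fun j _ => ?_)
        have h : (n + 1 + (j + 1)).choose (j + 1)
            = (n + 1 + j).choose j + (n + 1 + j).choose (j + 1) := by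
          rw [show n + 1 + (j + 1) = (n + 1 + j) + 1 by ring]
          exact Nat.choose_succ_succ _ _
        rw [h, show n + (j + 1) = n + 1 + j by ring]
        push_cast; ring
      · simp
    have hy2 : ∑ i ∈ range (n + 1), (((n + 1 + i).choose i : ℕ) : ℝ) * x ^ i
        = y - (((n + 1 + (n + 1)).choose (n + 1) : ℕ) : ℝ) * x ^ (n + 1) := by
      have hstep := Finset.sum_range_succ
        (fun i => (((n + 1 + i).choose i : ℕ) : ℝ) * x ^ i) (n + 1)
      rw [hy, hstep]; ring
    have e1 : ∑ j ∈ range (n + 1), (((n + 1 + j).choose j : ℕ) : ℝ) * x ^ (j + 1)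
        = x * (y - (((n + 1 + (n + 1)).choose (n + 1) : ℕ) : ℝ) * x ^ (n + 1)) := by
      rw [← hy2, Finset.mul_sum]
      exact Finset.sum_congr rfl (fun j _ => by ring)
    have e2 : ∑ j ∈ range (n + 1), (((n + (j + 1)).choose (j + 1) : ℕ) : ℝ) * x ^ (j + 1)
        = (2 ^ n + C * x ^ (n + 1)) - 1 := by
      have h : ∑ i ∈ range (n + 1 + 1), (((n + i).choose i : ℕ) : ℝ) * x ^ i
          = (∑ j ∈ range (n + 1), (((n + (j + 1)).choose (j + 1) : ℕ) : ℝ) * x ^ (j + 1)) + 1 := by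
        rw [Finset.sum_range_succ']
        simp
      have h2 : ∑ i ∈ range (n + 1 + 1), (((n + i).choose i : ℕ) : ℝ) * x ^ i
          = 2 ^ n + C * x ^ (n + 1) := by
        rw [Finset.sum_range_succ, ih, hC]
      linarith [h, h2]
    have hcc : (((n + 1 + (n + 1)).choose (n + 1) : ℕ) : ℝ) = 2 * C := by
      have h : (n + 1 + (n + 1)).choose (n + 1)
          = (n + (n + 1)).choose n + (n + (n + 1)).choose (n + 1) := by
        rw [show n + 1 + (n + 1) = (n + (n + 1)) + 1 by ring]
        exact Nat.choose_succ_succ _ _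
      have hsym : (n + (n + 1)).choose n = (n + (n + 1)).choose (n + 1) := by
        have h1 := Nat.choose_symm (show n + 1 ≤ n + (n + 1) by omega)
        have h0 : n + (n + 1) - (n + 1) = n := by omega
        rw [h0] at h1
        exact h1
      rw [h, hsym, hC]
      push_cast; ring
    have hxp : x ^ (n + 1) = 2 * x ^ (n + 2) := by
      rw [hx]
      rw [pow_succ (1/2 : ℝ) (n + 1)]
      ring
    have hkey : y = x * y - 2 * C * x ^ (n + 2)
        + (2 ^ n + C * x ^ (n + 1)) - 1 + 1 := by
      rw [hcc] at e1
      linear_combination hsplit + e1 + e2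
    rw [hxp] at hkey
    rw [hx] at hkey
    have : y = (1/2) * y + 2 ^ n := by linear_combination hkey
    have h2 : (2:ℝ) ^ (n + 1) = 2 * 2 ^ n := by ring
    linarith

lemma tail_sum (k : ℕ) (hk : 1 ≤ k) :
    2 * ∑ j ∈ Finset.Icc k (2 * k), (2 * k).choose j = 4 ^ k + (2 * k).choose k := by
  have A : (∑ j ∈ range k, (2 * k).choose j) + ∑ j ∈ Finset.Icc k (2 * k), (2 * k).choose j
      = 2 ^ (2 * k) := by
    rw [Finset.range_eq_Ico, show Finset.Icc k (2 * k) = Finset.Ico k (2 * k + 1) by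
      rw [Finset.Ico_add_one_right_eq_Icc]]
    rw [Finset.sum_Ico_consecutive _ (Nat.zero_le k) (by omega)]
    rw [← Finset.range_eq_Ico, show 2 * k + 1 = (2 * k) + 1 by ring, Nat.sum_range_choose]
  have B : ∑ j ∈ range k, (2 * k).choose j
      = ∑ j ∈ Finset.Icc (k + 1) (2 * k), (2 * k).choose j := by
    rw [show ∑ j ∈ Finset.Icc (k + 1) (2 * k), (2 * k).choose j
        = ∑ j ∈ Finset.Ico (k + 1) (2 * k + 1), (2 * k).choose j by rw [Finset.Ico_add_one_right_eq_Icc]]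
    rw [Finset.sum_Ico_eq_sum_range]
    rw [show 2 * k + 1 - (k + 1) = k by omega]
    rw [← Finset.sum_range_reflect]
    refine Finset.sum_congr rfl (fun j hj => ?_)
    rw [Finset.mem_range] at hj
    have h1 := Nat.choose_symm (show k + 1 + j ≤ 2 * k by omega)
    rw [show 2 * k - (k + 1 + j) = k - 1 - j by omega] at h1
    exact h1
  have C' : ∑ j ∈ Finset.Icc k (2 * k), (2 * k).choose j
      = (2 * k).choose k + ∑ j ∈ Finset.Icc (k + 1) (2 * k), (2 * k).choose j := by
    have hins : Finset.Icc k (2 * k) = insert k (Finset.Icc (k + 1) (2 * k)) := by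
      ext j; simp only [Finset.mem_Icc, Finset.mem_insert]; omega
    rw [hins, Finset.sum_insert (by simp only [Finset.mem_Icc]; omega)]
  have h4 : 4 ^ k = 2 ^ (2 * k) := by
    rw [show (4:ℕ) = 2 ^ 2 by norm_num, ← pow_mul]
  omega

theorem double_integral_max_eq_binomial_tail (d : ℕ) (hd : 2 ≤ d) (hev : Even d) :
    (1 / ((d : ℝ) * (Nat.factorial (d / 2 - 1) : ℝ) ^ 2)) *
      ∫ s in Set.Ioi (0:ℝ), ∫ t in Set.Ioi (0:ℝ),
        max s t * Real.exp (-s - t) * (s * t) ^ (d / 2 - 1)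
      = (∑ j ∈ Finset.Icc (d / 2) d, (Nat.choose d j : ℝ)) / 2 ^ d := by
  obtain ⟨r, hr⟩ := hev
  set k := d / 2 with hkdef
  have hk : 1 ≤ k := by omega
  have hdk : d = 2 * k := by omega
  set m := k - 1 with hmdef
  have hmk : m + 1 = k := by omega
  -- evaluate the double integral
  rw [show (∫ s in Ioi (0:ℝ), ∫ t in Ioi (0:ℝ),
        max s t * Real.exp (-s - t) * (s * t) ^ m)
      = ∫ s in Ioi (0:ℝ), Real.exp (-s) * s ^ m *
          (s * (m.factorial - Real.exp (-s) * Pp m s) + Real.exp (-s) * Pp (m + 1) s) from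
    setIntegral_congr_fun measurableSet_Ioi (fun s hs => inner_integral m hs),
    outer_integral m]
  rw [hdk]
  rw [show m + 2 = k + 1 by omega]
  rw [hmk]
  -- sum A
  have hfac : ∀ i : ℕ, ((k + i).factorial : ℝ)
      = ((k + i).choose i : ℝ) * i.factorial * k.factorial := by
    intro i
    have h := Nat.choose_mul_factorial_mul_factorial (show i ≤ k + i by omega)
    rw [show k + i - i = k by omega] at h
    exact_mod_cast h.symm
  have hfacm : ∀ i : ℕ, ((m + i).factorial : ℝ)
      = ((m + i).choose i : ℝ) * i.factorial * m.factorial := by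
    intro i
    have h := Nat.choose_mul_factorial_mul_factorial (show i ≤ m + i by omega)
    rw [show m + i - i = m by omega] at h
    exact_mod_cast h.symm
  have hA : ∑ i ∈ range k,
        ((m.factorial : ℝ) / (i.factorial : ℝ)) * ((k + i).factorial / 2 ^ (k + i + 1))
      = ((m.factorial : ℝ) * k.factorial / 2 ^ (k + 1)) *
          (2 ^ k - ((2 * k).choose k : ℝ) * (1/2 : ℝ) ^ k) := by
    have hterm : ∀ i ∈ range k,
        ((m.factorial : ℝ) / (i.factorial : ℝ)) * ((k + i).factorial / 2 ^ (k + i + 1))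
        = ((m.factorial : ℝ) * k.factorial / 2 ^ (k + 1)) *
            (((k + i).choose i : ℝ) * (1/2 : ℝ) ^ i) := by
      intro i _
      rw [hfac i, show k + i + 1 = (k + 1) + i by ring, pow_add]
      have hi : (i.factorial : ℝ) ≠ 0 := Nat.cast_ne_zero.mpr i.factorial_ne_zero
      have h2 : (2 : ℝ) ^ (k + 1) ≠ 0 := by positivity
      have h2i : (2 : ℝ) ^ i ≠ 0 := by positivity
      field_simp
      rw [mul_assoc, one_div, inv_pow, mul_inv_cancel₀ h2i, mul_one]
    rw [Finset.sum_congr rfl hterm, ← Finset.mul_sum]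
    have hS := S_eq k
    rw [Finset.sum_range_succ, show k + k = 2 * k by ring] at hS
    congr 1
    linarith [hS]
  rw [hA]
  -- sum B
  have hB : ∑ i ∈ range (k + 1),
        ((k.factorial : ℝ) / (i.factorial : ℝ)) * ((m + i).factorial / 2 ^ (m + i + 1))
      = ((m.factorial : ℝ) * k.factorial / 2 ^ k) *
          (2 ^ m + ((m + k).choose k : ℝ) * (1/2 : ℝ) ^ k) := by
    have hterm : ∀ i ∈ range (k + 1),
        ((k.factorial : ℝ) / (i.factorial : ℝ)) * ((m + i).factorial / 2 ^ (m + i + 1))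
        = ((m.factorial : ℝ) * k.factorial / 2 ^ k) *
            (((m + i).choose i : ℝ) * (1/2 : ℝ) ^ i) := by
      intro i _
      rw [hfacm i, show m + i + 1 = k + i by omega, pow_add]
      have hi : (i.factorial : ℝ) ≠ 0 := Nat.cast_ne_zero.mpr i.factorial_ne_zero
      have h2 : (2 : ℝ) ^ k ≠ 0 := by positivity
      have h2i : (2 : ℝ) ^ i ≠ 0 := by positivity
      field_simp
      rw [mul_assoc, one_div, inv_pow, mul_inv_cancel₀ h2i, mul_one]
    rw [Finset.sum_congr rfl hterm, ← Finset.mul_sum]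
    have hS := S_eq m
    rw [hmk] at hS
    rw [Finset.sum_range_succ, hS]
  rw [hB]
  -- the choose identity C(2k,k) = 2*C(m+k,k)
  have hccnat : (2 * k).choose k = 2 * ((m + k).choose k) := by
    rw [← hmk]
    have e : (2 * (m + 1)).choose (m + 1)
        = (m + (m + 1)).choose m + (m + (m + 1)).choose (m + 1) := by
      rw [show 2 * (m + 1) = (m + (m + 1)) + 1 by omega]
      exact Nat.choose_succ_succ _ _
    have esym : (m + (m + 1)).choose m = (m + (m + 1)).choose (m + 1) := by
      have h1 := Nat.choose_symm (show m + 1 ≤ m + (m + 1) by omega)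
      rw [show m + (m + 1) - (m + 1) = m by omega] at h1
      exact h1
    rw [e, esym]
    ring
  -- the tail sum
  have hT : (∑ j ∈ Finset.Icc k (2 * k), (((2 * k).choose j : ℕ) : ℝ))
      = 4 ^ k / 2 + ((m + k).choose k : ℝ) := by
    have h1 : (2 : ℝ) * ∑ j ∈ Finset.Icc k (2 * k), (((2 * k).choose j : ℕ) : ℝ)
        = 4 ^ k + ((2 * k).choose k : ℝ) := by
      have h0 := tail_sum k hk
      exact_mod_cast h0
    have h2 : ((2 * k).choose k : ℝ) = 2 * ((m + k).choose k : ℝ) := by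
      exact_mod_cast congrArg (Nat.cast : ℕ → ℝ) hccnat
    linarith
  rw [hT]
  have hccR : (((2 * k).choose k : ℕ) : ℝ) = 2 * (((m + k).choose k : ℕ) : ℝ) := by
    exact_mod_cast congrArg (Nat.cast : ℕ → ℝ) hccnat
  rw [hccR]
  -- final algebra
  have kfacR : (k.factorial : ℝ) = k * m.factorial := by
    rw [← hmk, Nat.factorial_succ]
    push_cast
    ring
  have h2d : (2:ℝ) ^ (2 * k) = 2 ^ k * 2 ^ k := by rw [two_mul, pow_add]
  have h4 : (4:ℝ) ^ k = 2 ^ k * 2 ^ k := by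
    rw [show (4:ℝ) = 2 * 2 by norm_num, mul_pow]
  have hm2 : (2:ℝ) ^ m = 2 ^ k / 2 := by rw [← hmk, pow_succ]; ring
  have hx : ((1:ℝ)/2) ^ k = 1 / 2 ^ k := by rw [div_pow, one_pow]
  have hk1 : (2:ℝ) ^ (k + 1) = 2 ^ k * 2 := pow_succ 2 k
  have hm0 : (m.factorial : ℝ) ≠ 0 := Nat.cast_ne_zero.mpr m.factorial_ne_zero
  have h2k0 : (2:ℝ) ^ k ≠ 0 := by positivity
  have hk0 : (k : ℝ) ≠ 0 := Nat.cast_ne_zero.mpr (by omega)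
  rw [h2d, h4, hm2, hx, hk1, kfacR]
  push_cast
  field_simp
  ring
end

section
/- Let 0 ≤ δ ≤ 1/(2√(t−1)) and p = 1/2 + δ, where t ≥ 4 is an odd integer. Then the probability that a Binomial(t, p) random variable exceeds t/2, namely ∑_{ℓ=(t+1)/2}^{t} C(t,ℓ) p^ℓ (1−p)^{t−ℓ}, satisfies 1/2 + (1/3)√t·δ ≤ ∑_{ℓ=(t+1)/2}^{t} C(t,ℓ) p^ℓ (1−p)^{t−ℓ} ≤ 1/2 + √t·δ. -/
open Finset

/-!
Write `t = 2k + 1` and `G(x)` for the probability that `Bin(t, x) ≥ k + 1`. As a sum of Bernstein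
polynomials, `G'` telescopes to `(2k + 1) C(2k, k) (x (1 - x))^k`, and `G(1/2) = 1/2` by symmetry.
Hence `G(1/2 + δ) - 1/2 = M ∫_{1/2}^{1/2+δ} (1 - (2x - 1)^2)^k dx` with
`M = (2k + 1) C(2k, k) / 4^k`.
The integrand lies between `(1 - 4δ^2)^k ≥ 1/2` (Bernoulli, as `8kδ^2 ≤ 1`) and `1`, and the
classical bounds `4^k / (2√k) ≤ C(2k, k) ≤ 4^k / √(2k + 1)` give `(2/3)√t ≤ M ≤ √t`.
-/

namespace Nat

theorem two_mul_add_one_mul_centralBinom_sq_le (n : ℕ) :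
    (2 * n + 1) * centralBinom n ^ 2 ≤ 16 ^ n := by
  induction n with
  | zero => simp
  | succ n ih =>
    have key : (n + 1) ^ 2 * ((2 * (n + 1) + 1) * centralBinom (n + 1) ^ 2)
        ≤ (n + 1) ^ 2 * 16 ^ (n + 1) :=
      calc (n + 1) ^ 2 * ((2 * (n + 1) + 1) * centralBinom (n + 1) ^ 2)
          = (2 * n + 3) * ((n + 1) * centralBinom (n + 1)) ^ 2 := by ring
        _ = 4 * (2 * n + 3) * (2 * n + 1) * ((2 * n + 1) * centralBinom n ^ 2) := by
          rw [succ_mul_centralBinom_succ]; ring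
        _ ≤ 16 * (n + 1) ^ 2 * 16 ^ n := Nat.mul_le_mul (by nlinarith) ih
        _ = (n + 1) ^ 2 * 16 ^ (n + 1) := by ring
    exact Nat.le_of_mul_le_mul_left key (by positivity)

theorem sixteen_pow_le_four_mul_mul_centralBinom_sq {n : ℕ} (hn : 0 < n) :
    16 ^ n ≤ 4 * n * centralBinom n ^ 2 := by
  induction n, hn using Nat.le_induction with
  | base => simp [centralBinom, choose]
  | succ n hn ih =>
    have key : (n + 1) * 16 ^ (n + 1) ≤ (n + 1) * (4 * (n + 1) * centralBinom (n + 1) ^ 2) :=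
      calc (n + 1) * 16 ^ (n + 1) = 16 * (n + 1) * 16 ^ n := by ring
        _ ≤ 16 * (n + 1) * (4 * n * centralBinom n ^ 2) := by gcongr
        _ = 16 * (4 * n * (n + 1)) * centralBinom n ^ 2 := by ring
        _ ≤ 16 * (2 * n + 1) ^ 2 * centralBinom n ^ 2 := by gcongr; nlinarith
        _ = 4 * ((n + 1) * centralBinom (n + 1)) ^ 2 := by rw [succ_mul_centralBinom_succ]; ring
        _ = (n + 1) * (4 * (n + 1) * centralBinom (n + 1) ^ 2) := by ring
    exact Nat.le_of_mul_le_mul_left key (by positivity)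

end Nat

theorem bernsteinPolynomial.derivative_sum_Icc (R : Type*) [CommRing R] (n m : ℕ) :
    Polynomial.derivative (∑ ν ∈ Icc (m + 1) (n + 1), bernsteinPolynomial R (n + 1) ν)
      = (n + 1) * bernsteinPolynomial R n m := by
  have hIcc : Icc (m + 1) (n + 1) = Ico (m + 1) (m + 1 + (n + 1 - m)) := by
    ext; simp only [mem_Icc, mem_Ico]; omega
  have telescope : ∑ i ∈ range (n + 1 - m),
      (bernsteinPolynomial R n (m + i) - bernsteinPolynomial R n (m + (i + 1)))
        = bernsteinPolynomial R n m := by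
    rw [sum_range_sub' (fun i => bernsteinPolynomial R n (m + i)), add_zero,
      bernsteinPolynomial.eq_zero_of_lt R (by omega : n < m + (n + 1 - m)), sub_zero]
  rw [hIcc, sum_Ico_eq_sum_range, Polynomial.derivative_sum, add_tsub_cancel_left, ← telescope,
    mul_sum]
  refine sum_congr rfl fun i _ => ?_
  rw [add_right_comm, bernsteinPolynomial.derivative_succ]
  simp [add_assoc]

noncomputable def binomialUpperTail (n m : ℕ) (x : ℝ) : ℝ :=
  ∑ ℓ ∈ Icc m n, (n.choose ℓ : ℝ) * x ^ ℓ * (1 - x) ^ (n - ℓ)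

theorem binomialUpperTail_eq_eval (n m : ℕ) (x : ℝ) :
    binomialUpperTail n m x = (∑ ν ∈ Icc m n, bernsteinPolynomial ℝ n ν).eval x := by
  simp [binomialUpperTail, bernsteinPolynomial, Polynomial.eval_finsetSum]

theorem hasDerivAt_binomialUpperTail (n m : ℕ) (x : ℝ) :
    HasDerivAt (binomialUpperTail (n + 1) (m + 1))
      ((n + 1) * n.choose m * x ^ m * (1 - x) ^ (n - m)) x := by
  rw [funext (binomialUpperTail_eq_eval (n + 1) (m + 1))]
  refine (Polynomial.hasDerivAt _ x).congr_deriv ?_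
  rw [bernsteinPolynomial.derivative_sum_Icc]
  simp [bernsteinPolynomial, mul_assoc]

theorem binomialUpperTail_sub_eq_integral (n m : ℕ) (a b : ℝ) :
    binomialUpperTail (n + 1) (m + 1) b - binomialUpperTail (n + 1) (m + 1) a
      = ∫ x in a..b, (n + 1) * n.choose m * x ^ m * (1 - x) ^ (n - m) :=
  (intervalIntegral.integral_eq_sub_of_hasDerivAt
    (fun x _ => hasDerivAt_binomialUpperTail n m x)
    (Continuous.intervalIntegrable (by fun_prop) a b)).symm

theorem binomialUpperTail_two_mul_add_one_half (k : ℕ) :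
    binomialUpperTail (2 * k + 1) (k + 1) (1 / 2) = 1 / 2 := by
  have hsum : ∑ ℓ ∈ Icc (k + 1) (2 * k + 1), (2 * k + 1).choose ℓ = 4 ^ k := by
    have := sum_range_add_sum_Ico (fun ℓ => (2 * k + 1).choose ℓ)
      (by omega : k + 1 ≤ 2 * k + 1 + 1)
    rw [Nat.sum_range_choose, Nat.sum_range_choose_halfway, pow_succ, pow_mul] at this
    rw [← Ico_add_one_right_eq_Icc]
    norm_num at this
    omega
  calc binomialUpperTail (2 * k + 1) (k + 1) (1 / 2)
      = ∑ ℓ ∈ Icc (k + 1) (2 * k + 1),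
          ((2 * k + 1).choose ℓ : ℝ) * (1 / 2) ^ (2 * k + 1) := by
        refine sum_congr rfl fun ℓ hℓ => ?_
        rw [mem_Icc] at hℓ
        rw [mul_assoc, show (1 : ℝ) - 1 / 2 = 1 / 2 by norm_num, ← pow_add,
          Nat.add_sub_of_le hℓ.2]
    _ = 1 / 2 := by
        rw [← sum_mul, ← Nat.cast_sum, hsum, pow_succ, pow_mul]
        push_cast
        rw [← mul_assoc, ← mul_pow]
        norm_num

/-- The derivative of `binomialUpperTail (2 * k + 1) (k + 1)` at `1 / 2`. -/
noncomputable def majoritySlope (k : ℕ) : ℝ :=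
  (2 * k + 1) * Nat.centralBinom k / 4 ^ k

theorem binomialUpperTail_two_mul_add_one_half_add (k : ℕ) (δ : ℝ) :
    binomialUpperTail (2 * k + 1) (k + 1) (1 / 2 + δ)
      = 1 / 2 + majoritySlope k * ∫ x in (1 / 2)..(1 / 2 + δ), (1 - (2 * x - 1) ^ 2) ^ k := by
  have h := binomialUpperTail_sub_eq_integral (2 * k) k (1 / 2) (1 / 2 + δ)
  rw [binomialUpperTail_two_mul_add_one_half] at h
  rw [← sub_eq_iff_eq_add', h, majoritySlope, ← intervalIntegral.integral_const_mul]
  congr 1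
  funext x
  rw [Nat.centralBinom_eq_two_mul_choose, show 2 * k - k = k by omega,
    show 1 - (2 * x - 1) ^ 2 = 4 * (x * (1 - x)) by ring, mul_pow, mul_pow]
  push_cast
  field_simp

theorem majoritySlope_le_sqrt (k : ℕ) : majoritySlope k ≤ √(2 * k + 1 : ℝ) := by
  have h : ((2 * k + 1) * Nat.centralBinom k ^ 2 : ℝ) ≤ (4 ^ k) ^ 2 := by
    rw [← pow_mul, pow_mul']
    exact_mod_cast Nat.two_mul_add_one_mul_centralBinom_sq_le k
  rw [majoritySlope, Real.le_sqrt (by positivity) (by positivity)]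
  field_simp
  nlinarith

theorem sqrt_le_three_halves_mul_majoritySlope {k : ℕ} (hk : 0 < k) :
    √(2 * k + 1 : ℝ) ≤ 3 / 2 * majoritySlope k := by
  have h : ((4 : ℝ) ^ k) ^ 2 ≤ 4 * k * Nat.centralBinom k ^ 2 := by
    rw [← pow_mul, pow_mul']
    exact_mod_cast Nat.sixteen_pow_le_four_mul_mul_centralBinom_sq hk
  rw [majoritySlope, Real.sqrt_le_left (by positivity)]
  field_simp
  nlinarith

theorem integral_one_sub_two_mul_sub_one_sq_pow_le (k : ℕ) {δ : ℝ} (hδ0 : 0 ≤ δ)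
    (hδ1 : 2 * δ ≤ 1) : ∫ x in (1 / 2)..(1 / 2 + δ), (1 - (2 * x - 1) ^ 2) ^ k ≤ δ :=
  calc ∫ x in (1 / 2)..(1 / 2 + δ), (1 - (2 * x - 1) ^ 2) ^ k
      ≤ ∫ _ in (1 / 2)..(1 / 2 + δ), (1 : ℝ) :=
        intervalIntegral.integral_mono_on (by linarith)
          (Continuous.intervalIntegrable (by fun_prop) _ _) intervalIntegrable_const
          fun x ⟨hx0, hx1⟩ => pow_le_one₀ (by nlinarith) (by nlinarith)
    _ = δ := by simp

theorem mul_one_sub_four_mul_sq_pow_le_integral (k : ℕ) {δ : ℝ} (hδ0 : 0 ≤ δ)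
    (hδ1 : 2 * δ ≤ 1) :
    δ * (1 - 4 * δ ^ 2) ^ k ≤ ∫ x in (1 / 2)..(1 / 2 + δ), (1 - (2 * x - 1) ^ 2) ^ k :=
  calc δ * (1 - 4 * δ ^ 2) ^ k = ∫ _ in (1 / 2)..(1 / 2 + δ), (1 - 4 * δ ^ 2) ^ k := by simp
    _ ≤ ∫ x in (1 / 2)..(1 / 2 + δ), (1 - (2 * x - 1) ^ 2) ^ k :=
        intervalIntegral.integral_mono_on (by linarith) intervalIntegrable_const
          (Continuous.intervalIntegrable (by fun_prop) _ _)
          fun x ⟨hx0, hx1⟩ => pow_le_pow_left₀ (by nlinarith) (by nlinarith) k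

theorem binomial_majority_bounds (t : ℕ) (ht : 4 ≤ t) (hodd : Odd t)
    (δ : ℝ) (hδ0 : 0 ≤ δ) (hδ : δ ≤ 1 / (2 * Real.sqrt ((t : ℝ) - 1))) :
    1 / 2 + (1 / 3) * Real.sqrt t * δ
      ≤ ∑ ℓ ∈ Finset.Icc ((t + 1) / 2) t,
          (Nat.choose t ℓ : ℝ) * (1 / 2 + δ) ^ ℓ * (1 - (1 / 2 + δ)) ^ (t - ℓ) ∧
    ∑ ℓ ∈ Finset.Icc ((t + 1) / 2) t,
        (Nat.choose t ℓ : ℝ) * (1 / 2 + δ) ^ ℓ * (1 - (1 / 2 + δ)) ^ (t - ℓ)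
      ≤ 1 / 2 + Real.sqrt t * δ := by
  obtain ⟨k, rfl⟩ := hodd
  have hk : 0 < k := by omega
  rw [show (2 * k + 1 + 1) / 2 = k + 1 by omega]
  change _ ≤ binomialUpperTail _ _ _ ∧ binomialUpperTail _ _ _ ≤ _
  rw [binomialUpperTail_two_mul_add_one_half_add]
  push_cast at hδ ⊢
  have hδsq : 8 * k * δ ^ 2 ≤ 1 := by
    rw [add_sub_cancel_right, le_div_iff₀ (by positivity)] at hδ
    nlinarith [mul_self_le_mul_self (by positivity) hδ,
      Real.sq_sqrt (by positivity : (0 : ℝ) ≤ 2 * k)]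
  have hδ1 : 2 * δ ≤ 1 := by nlinarith [(by exact_mod_cast hk : (1 : ℝ) ≤ k)]
  have hbernoulli : 1 / 2 ≤ (1 - 4 * δ ^ 2) ^ k := by
    have := one_add_mul_le_pow (by nlinarith : (-2 : ℝ) ≤ -(4 * δ ^ 2)) k
    rw [← sub_eq_add_neg] at this
    nlinarith
  have hI_lower := mul_one_sub_four_mul_sq_pow_le_integral k hδ0 hδ1
  have hI_upper := integral_one_sub_two_mul_sub_one_sq_pow_le k hδ0 hδ1
  have hM_upper := majoritySlope_le_sqrt k
  have hM_lower := sqrt_le_three_halves_mul_majoritySlope hk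
  have hM : 0 ≤ majoritySlope k := by unfold majoritySlope; positivity
  constructor
  · calc 1 / 2 + 1 / 3 * √(2 * k + 1 : ℝ) * δ
        ≤ 1 / 2 + majoritySlope k * (δ * (1 - 4 * δ ^ 2) ^ k) := by
          nlinarith [mul_le_mul_of_nonneg_left hbernoulli hδ0]
      _ ≤ _ := by gcongr
  · calc 1 / 2 + majoritySlope k * _ ≤ 1 / 2 + majoritySlope k * δ := by gcongr
      _ ≤ 1 / 2 + √(2 * k + 1 : ℝ) * δ := by gcongr
end

section
/- For an odd positive integer t and p ∈ [1/2, 1], the tail sum ∑_{ℓ=(t+1)/2}^{t} C(t,ℓ) p^ℓ (1−p)^{t−ℓ} equals 1/2 + (1/2)·I_{4δ²}(1/2, (t+1)/2), where δ = p − 1/2 and I_x(a,b) is the regularized incomplete beta function. -/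
/-!
Write `t = 2k + 1`. Differentiating the upper tail `T(p)` term by term, the sum telescopes to
`(2k+1)·C(2k,k)·(p(1-p))^k`, and `T(1/2) = 1/2` because the upper half of row `2k+1` of Pascal's
triangle sums to `4^k`; hence `T(p) = 1/2 + (2k+1)·C(2k,k)·∫_{1/2}^p (q(1-q))^k dq`. The
substitution `s = 4(q - 1/2)^2` turns this integral into
`4^{-(k+1)}·∫_0^{4(p-1/2)^2} s^{-1/2}(1-s)^k ds`, and Legendre's duplication formula gives `B(1/2, k+1) = 2·4^k / ((2k+1)·C(2k,k))`.
-/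

open Finset

/-- The regularized incomplete beta function `I_x(a,b)`. -/
noncomputable def regIncBeta (x a b : ℝ) : ℝ :=
  (∫ s in (0:ℝ)..x, s ^ (a - 1) * (1 - s) ^ (b - 1)) /
    (Real.Gamma a * Real.Gamma b / Real.Gamma (a + b))

open scoped Nat Real

theorem hasDerivAt_sum_Icc_choose_mul_pow_mul_one_sub_pow (n m : ℕ) (hm : m ≤ n + 1) (q : ℝ) :
    HasDerivAt (fun q : ℝ => ∑ ℓ ∈ Icc m n, (n.choose ℓ : ℝ) * q ^ ℓ * (1 - q) ^ (n - ℓ))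
      (m * n.choose m * q ^ (m - 1) * (1 - q) ^ (n - m)) q := by
  set a : ℕ → ℝ := fun j => j * n.choose j * q ^ (j - 1) * (1 - q) ^ (n - j) with ha
  have hterm (ℓ : ℕ) : HasDerivAt (fun q : ℝ => (n.choose ℓ : ℝ) * q ^ ℓ * (1 - q) ^ (n - ℓ))
      (a ℓ - a (ℓ + 1)) q := by
    have h : HasDerivAt (fun y : ℝ => (n.choose ℓ : ℝ) * y ^ ℓ * (1 - y) ^ (n - ℓ))
        (n.choose ℓ * (ℓ * q ^ (ℓ - 1)) * (1 - q) ^ (n - ℓ)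
          + n.choose ℓ * q ^ ℓ * ((n - ℓ : ℕ) * (1 - q) ^ (n - ℓ - 1) * -1)) q :=
      ((hasDerivAt_pow ℓ q).const_mul _).mul (((hasDerivAt_id q).const_sub 1).fun_pow (n - ℓ))
    refine h.congr_deriv ?_
    have hc : ((n.choose (ℓ + 1) * (ℓ + 1) : ℕ) : ℝ) = n.choose ℓ * (n - ℓ : ℕ) := by
      rw [Nat.choose_succ_right_eq]; push_cast; ring
    simp only [ha, Nat.add_sub_cancel, Nat.sub_add_eq]
    push_cast at hc ⊢
    linear_combination (q ^ ℓ * (1 - q) ^ (n - ℓ - 1)) * hc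
  have htelescope : ∑ ℓ ∈ Icc m n, (a ℓ - a (ℓ + 1)) = a m := by
    have hvanish : a (n + 1) = 0 := by simp [ha, Nat.choose_succ_self]
    have h := sum_Ico_sub a hm
    rw [← Ico_add_one_right_eq_Icc, sum_sub_distrib]
    rw [sum_sub_distrib, hvanish] at h
    linarith
  simpa only [htelescope] using HasDerivAt.fun_sum (u := Icc m n) fun ℓ _ => hterm ℓ

theorem sum_Icc_choose_odd_upper_half (k : ℕ) :
    ∑ ℓ ∈ Icc (k + 1) (2 * k + 1), (2 * k + 1).choose ℓ = 4 ^ k := by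
  have htotal := sum_range_add_sum_Ico (fun ℓ => (2 * k + 1).choose ℓ)
    (by omega : k + 1 ≤ 2 * k + 1 + 1)
  rw [Nat.sum_range_choose_halfway, Nat.sum_range_choose, Ico_add_one_right_eq_Icc] at htotal
  have hpow : 2 ^ (2 * k + 1) = 4 ^ k + 4 ^ k := by rw [pow_succ, pow_mul]; ring
  omega

theorem sum_Icc_choose_odd_mul_half_pow_eq_half (k : ℕ) :
    ∑ ℓ ∈ Icc (k + 1) (2 * k + 1),
      ((2 * k + 1).choose ℓ : ℝ) * (1 / 2) ^ ℓ * (1 - 1 / 2) ^ (2 * k + 1 - ℓ) = 1 / 2 := by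
  have hterm : ∀ ℓ ∈ Icc (k + 1) (2 * k + 1),
      ((2 * k + 1).choose ℓ : ℝ) * (1 / 2) ^ ℓ * (1 - 1 / 2) ^ (2 * k + 1 - ℓ)
        = ((2 * k + 1).choose ℓ : ℝ) * (1 / 2) ^ (2 * k + 1) := fun ℓ hℓ => by
    rw [mul_assoc, show (1 - 1 / 2 : ℝ) = 1 / 2 by norm_num, ← pow_add,
      Nat.add_sub_cancel' (mem_Icc.1 hℓ).2]
  rw [sum_congr rfl hterm, ← sum_mul, ← Nat.cast_sum, sum_Icc_choose_odd_upper_half, pow_succ,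
    pow_mul]
  push_cast
  rw [← mul_assoc, ← mul_pow]
  norm_num

theorem sum_Icc_choose_odd_mul_pow_eq_half_add_integral (k : ℕ) (p : ℝ) :
    ∑ ℓ ∈ Icc (k + 1) (2 * k + 1), ((2 * k + 1).choose ℓ : ℝ) * p ^ ℓ * (1 - p) ^ (2 * k + 1 - ℓ)
      = 1 / 2 + (2 * k + 1) * k.centralBinom * ∫ q in (1 / 2 : ℝ)..p, (q * (1 - q)) ^ k := by
  have hderiv (q : ℝ) : HasDerivAt
      (fun q : ℝ => ∑ ℓ ∈ Icc (k + 1) (2 * k + 1),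
        ((2 * k + 1).choose ℓ : ℝ) * q ^ ℓ * (1 - q) ^ (2 * k + 1 - ℓ))
      ((2 * k + 1) * k.centralBinom * (q * (1 - q)) ^ k) q := by
    convert hasDerivAt_sum_Icc_choose_mul_pow_mul_one_sub_pow (2 * k + 1) (k + 1) (by omega) q
      using 1
    have hcoeff : (2 * k + 1 : ℝ) * k.centralBinom = (k + 1 : ℕ) * (2 * k + 1).choose (k + 1) := by
      rw [Nat.centralBinom_eq_two_mul_choose, mul_comm ((k + 1 : ℕ) : ℝ)]
      exact_mod_cast Nat.add_one_mul_choose_eq (2 * k) k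
    rw [Nat.add_sub_cancel, show 2 * k + 1 - (k + 1) = k by omega, mul_pow, hcoeff]
    ring
  rw [← intervalIntegral.integral_const_mul, intervalIntegral.integral_eq_sub_of_hasDerivAt
    (fun q _ => hderiv q) (Continuous.intervalIntegrable (by fun_prop) _ _),
    sum_Icc_choose_odd_mul_half_pow_eq_half]
  ring

theorem integral_rpow_neg_half_mul_one_sub_rpow_eq (k : ℕ) {p : ℝ} (hp : 1 / 2 ≤ p) :
    ∫ s in (0 : ℝ)..4 * (p - 1 / 2) ^ 2, s ^ ((1 : ℝ) / 2 - 1) * (1 - s) ^ (k : ℝ)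
      = 4 ^ (k + 1) * ∫ q in (1 / 2 : ℝ)..p, (q * (1 - q)) ^ k := by
  have hsubst := intervalIntegral.integral_comp_mul_deriv_of_deriv_nonneg
    (f := fun q : ℝ => 4 * (q - 1 / 2) ^ 2) (f' := fun q => 8 * (q - 1 / 2))
    (g := fun s : ℝ => s ^ ((1 : ℝ) / 2 - 1) * (1 - s) ^ (k : ℝ)) (a := 1 / 2) (b := p)
    (by fun_prop)
    (fun q _ => (((hasDerivAt_id q).sub_const (1 / 2)).pow 2 |>.const_mul 4).congr_deriv
      (by simp only [id]; ring))
    (fun q hq => by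
      rw [min_eq_left hp] at hq
      linarith [hq.1])
  simp only [Function.comp_apply, sub_self, ne_eq, OfNat.ofNat_ne_zero, not_false_eq_true,
    zero_pow, mul_zero] at hsubst
  rw [← hsubst, ← intervalIntegral.integral_const_mul]
  refine intervalIntegral.integral_congr_ae (Filter.Eventually.of_forall fun q hq => ?_)
  rw [Set.uIoc_of_le hp] at hq
  -- with `d = 2(q - 1/2) > 0`: `s^{-1/2} = d⁻¹`, `ds = 4d dq` and `1 - s = 4q(1 - q)`
  set d := 2 * (q - 1 / 2) with hd_def
  have hd : 0 < d := by linarith [hq.1]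
  rw [show 4 * (q - 1 / 2) ^ 2 = d ^ 2 by ring, ← Real.rpow_natCast d 2, ← Real.rpow_mul hd.le,
    show ((2 : ℕ) : ℝ) * (1 / 2 - 1) = -1 by norm_num, Real.rpow_neg_one, Real.rpow_natCast,
    Real.rpow_natCast, show 1 - d ^ 2 = 4 * (q * (1 - q)) by ring, mul_pow,
    show 8 * (q - 1 / 2) = 4 * d by ring]
  field_simp
  ring

theorem Gamma_one_half_mul_Gamma_nat_add_one_div_Gamma (k : ℕ) :
    Real.Gamma (1 / 2) * Real.Gamma (k + 1) / Real.Gamma (1 / 2 + (k + 1))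
      = 2 * 4 ^ k / ((2 * k + 1) * k.centralBinom) := by
  have hdup := Real.Gamma_mul_Gamma_add_half ((k : ℝ) + 1)
  rw [show 2 * ((k : ℝ) + 1) = ((2 * k + 1 : ℕ) : ℝ) + 1 by push_cast; ring,
    show (1 : ℝ) - (((2 * k + 1 : ℕ) : ℝ) + 1) = -((2 * k + 1 : ℕ) : ℝ) by ring,
    Real.rpow_neg zero_le_two, Real.rpow_natCast, Real.Gamma_nat_eq_factorial,
    Real.Gamma_nat_eq_factorial] at hdup
  have hfact : ((2 * k + 1)! : ℝ) = (2 * k + 1) * k.centralBinom * k ! * k ! := by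
    rw [Nat.factorial_succ, Nat.centralBinom_eq_two_mul_choose,
      ← Nat.choose_mul_factorial_mul_factorial (by omega : k ≤ 2 * k),
      show 2 * k - k = k by omega]
    push_cast
    ring
  have hk : (k ! : ℝ) ≠ 0 := by positivity
  have hGamma : Real.Gamma ((k : ℝ) + 1 + 1 / 2) = (2 * k + 1)! * (2 ^ (2 * k + 1))⁻¹ * √π / k ! :=
    eq_div_of_mul_eq hk (by rw [mul_comm]; exact hdup)
  rw [Real.Gamma_one_half_eq, Real.Gamma_nat_eq_factorial, add_comm (1 / 2 : ℝ), hGamma, hfact,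
    pow_succ, pow_mul]
  field_simp
  norm_num

theorem binomial_tail_eq_regIncBeta_odd_general (t : ℕ) (hodd : Odd t)
    (p : ℝ) (hp : 1 / 2 ≤ p) :
    ∑ ℓ ∈ Finset.Icc ((t + 1) / 2) t,
        (Nat.choose t ℓ : ℝ) * p ^ ℓ * (1 - p) ^ (t - ℓ)
      = 1 / 2 + (1 / 2) * regIncBeta (4 * (p - 1 / 2) ^ 2) (1 / 2) (((t : ℝ) + 1) / 2) := by
  obtain ⟨k, rfl⟩ := hodd
  have hb : (((2 * k + 1 : ℕ) : ℝ) + 1) / 2 = k + 1 := by push_cast; ring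
  have hcb : (k.centralBinom : ℝ) ≠ 0 := by exact_mod_cast k.centralBinom_ne_zero
  rw [show (2 * k + 1 + 1) / 2 = k + 1 by omega, sum_Icc_choose_odd_mul_pow_eq_half_add_integral,
    regIncBeta, hb, add_sub_cancel_right, integral_rpow_neg_half_mul_one_sub_rpow_eq k hp,
    Gamma_one_half_mul_Gamma_nat_add_one_div_Gamma]
  field_simp
  ring

theorem binomial_tail_eq_regIncBeta_odd (t : ℕ) (ht : 0 < t) (hodd : Odd t)
    (p : ℝ) (hp : 1 / 2 ≤ p) (hp1 : p ≤ 1) :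
    ∑ ℓ ∈ Finset.Icc ((t + 1) / 2) t,
        (Nat.choose t ℓ : ℝ) * p ^ ℓ * (1 - p) ^ (t - ℓ)
      = 1 / 2 + (1 / 2) * regIncBeta (4 * (p - 1 / 2) ^ 2) (1 / 2) (((t : ℝ) + 1) / 2) :=
  binomial_tail_eq_regIncBeta_odd_general t hodd p hp
end
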